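/- For every instance and every non-trivial pure Nash equilibrium (p,q): the optimal welfare is at most D times the welfare of the equilibrium, SW(0) ≤ D·SW(p+q); and the monopolist revenue is at most 2D times the revenue of the equilibrium, R(x) ≤ 2D·R(p+q) for every x ≥ 0, where D = d_n/d_1. -/

import Mathlib

open scoped Classical

/-- The demand function induced by an instance with `n` demand levels,
values `v` and demands `d` (indices `1,…,n`):
`demand n v d x = d i` for the largest index `i ∈ {1,…,n}` with `x ≤ v i`,
and `0` if there is no such index. -/
noncomputable def demand (n : ℕ) (v d : ℕ → ℝ) (x : ℝ) : ℝ :=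
  if h : ((Finset.Icc 1 n).filter (fun i => x ≤ v i)).Nonempty then
    d (((Finset.Icc 1 n).filter (fun i => x ≤ v i)).max' h)
  else 0

/-- Total revenue at total price `x`. -/
noncomputable def rev (n : ℕ) (v d : ℕ → ℝ) (x : ℝ) : ℝ := x * demand n v d x

/-- Social welfare at total price `x` (with the convention `d 0 = 0`). -/
noncomputable def welfare (n : ℕ) (v d : ℕ → ℝ) (x : ℝ) : ℝ :=
  ∑ i ∈ (Finset.Icc 1 n).filter (fun i => x ≤ v i),
    v i * (d i - if 1 < i then d (i - 1) else 0)

/-- `InBR n v d q p` : `p` is a best response to the price `q` of the other seller. -/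
def InBR (n : ℕ) (v d : ℕ → ℝ) (q p : ℝ) : Prop :=
  0 ≤ p ∧ ∀ p', 0 ≤ p' → p' * demand n v d (p' + q) ≤ p * demand n v d (p + q)

/-- `(p, q)` is a pure Nash equilibrium. -/
def IsNE (n : ℕ) (v d : ℕ → ℝ) (p q : ℝ) : Prop :=
  0 ≤ p ∧ 0 ≤ q ∧ InBR n v d q p ∧ InBR n v d p q

/-- A valid instance with `n ≥ 2` demand levels: positive values strictly
decreasing in the index, positive demands strictly increasing in the index. -/
def ValidInstance (n : ℕ) (v d : ℕ → ℝ) : Prop :=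
  2 ≤ n ∧ 0 < v n ∧ (∀ i j, 1 ≤ i → i < j → j ≤ n → v j < v i) ∧
    0 < d 1 ∧ (∀ i j, 1 ≤ i → i < j → j ≤ n → d i < d j)

/-!
Every quantity in the statement is sandwiched between `v 1 * d 1` and `v 1 * d n`. The optimal
welfare and any revenue are at most `v 1 * d n`, since no buyer pays more than `v 1` and at most
`d n` units are sold. At a non-trivial equilibrium the top buyer class is served, so the welfare is
at least `v 1 * d 1`; and each seller may deviate to the price `v 1` minus the other's price and
still sell `d 1` units, so adding the two deviation inequalities gives
`(2 v 1 - (p + q)) d 1 ≤ R(p + q)`, whence `v 1 * d 1 ≤ R(p + q)`.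
-/

open Finset

variable {n : ℕ} {v d : ℕ → ℝ}

namespace ValidInstance

lemma one_le (h : ValidInstance n v d) : 1 ≤ n := one_le_two.trans h.1

lemma v_le_v (h : ValidInstance n v d) {i j : ℕ} (hi : 1 ≤ i) (hij : i ≤ j) (hj : j ≤ n) :
    v j ≤ v i := by
  rcases hij.eq_or_lt with rfl | hlt
  · exact le_rfl
  · exact (h.2.2.1 i j hi hlt hj).le

lemma d_le_d (h : ValidInstance n v d) {i j : ℕ} (hi : 1 ≤ i) (hij : i ≤ j) (hj : j ≤ n) :
    d i ≤ d j := by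
  rcases hij.eq_or_lt with rfl | hlt
  · exact le_rfl
  · exact (h.2.2.2.2 i j hi hlt hj).le

lemma v_pos (h : ValidInstance n v d) {i : ℕ} (hi : 1 ≤ i) (hin : i ≤ n) : 0 < v i :=
  h.2.1.trans_le (h.v_le_v hi hin le_rfl)

lemma d_pos (h : ValidInstance n v d) {i : ℕ} (hi : 1 ≤ i) (hin : i ≤ n) : 0 < d i :=
  h.2.2.2.1.trans_le (h.d_le_d le_rfl hi hin)

lemma d_sub_prev_nonneg (h : ValidInstance n v d) {i : ℕ} (hi : i ∈ Icc 1 n) :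
    0 ≤ d i - if 1 < i then d (i - 1) else 0 := by
  rw [mem_Icc] at hi
  split_ifs with hi1
  · linarith [h.d_le_d (by omega : 1 ≤ i - 1) (Nat.sub_le i 1) hi.2]
  · linarith [h.d_pos hi.1 hi.2]

lemma welfare_term_nonneg (h : ValidInstance n v d) {i : ℕ} (hi : i ∈ Icc 1 n) :
    0 ≤ v i * (d i - if 1 < i then d (i - 1) else 0) :=
  mul_nonneg (h.v_pos (mem_Icc.1 hi).1 (mem_Icc.1 hi).2).le (h.d_sub_prev_nonneg hi)

end ValidInstance

lemma sum_Icc_sub_prev (f : ℕ → ℝ) {n : ℕ} (hn : 1 ≤ n) :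
    ∑ i ∈ Icc 1 n, (f i - if 1 < i then f (i - 1) else 0) = f n := by
  induction n, hn using Nat.le_induction with
  | base => simp
  | succ m hm ih =>
    rw [sum_Icc_succ_top (by omega), ih, if_pos (by omega), Nat.add_sub_cancel]
    ring

lemma demand_eq_zero_or_exists (n : ℕ) (v d : ℕ → ℝ) (x : ℝ) :
    (demand n v d x = 0 ∧ ∀ i ∈ Icc 1 n, v i < x) ∨
      ∃ i ∈ Icc 1 n, x ≤ v i ∧ demand n v d x = d i := by
  unfold demand
  split_ifs with hne
  · have hmem := max'_mem _ hne
    rw [mem_filter] at hmem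
    exact Or.inr ⟨_, hmem.1, hmem.2, rfl⟩
  · simp only [not_nonempty_iff_eq_empty, filter_eq_empty_iff, not_le] at hne
    exact Or.inl ⟨rfl, hne⟩

lemma d_one_le_demand (h : ValidInstance n v d) {x : ℝ} (hx : x ≤ v 1) :
    d 1 ≤ demand n v d x := by
  rcases demand_eq_zero_or_exists n v d x with ⟨-, hlt⟩ | ⟨i, hi, -, hdi⟩
  · exact absurd (hlt 1 (mem_Icc.2 ⟨le_rfl, h.one_le⟩)) (not_lt.2 hx)
  · rw [mem_Icc] at hi
    exact hdi ▸ h.d_le_d le_rfl hi.1 hi.2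

lemma rev_le (h : ValidInstance n v d) (x : ℝ) : rev n v d x ≤ v 1 * d n := by
  have hv1 := h.v_pos le_rfl h.one_le
  have hdn := h.d_pos h.one_le le_rfl
  rcases demand_eq_zero_or_exists n v d x with ⟨hzero, -⟩ | ⟨i, hi, hxi, hdi⟩
  · rw [rev, hzero, mul_zero]
    positivity
  · rw [mem_Icc] at hi
    rw [rev, hdi]
    calc x * d i ≤ v 1 * d i :=
          mul_le_mul_of_nonneg_right (hxi.trans (h.v_le_v le_rfl hi.1 hi.2))
            (h.d_pos hi.1 hi.2).le
      _ ≤ v 1 * d n := mul_le_mul_of_nonneg_left (h.d_le_d hi.1 hi.2 le_rfl) hv1.le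

lemma welfare_le (h : ValidInstance n v d) (x : ℝ) : welfare n v d x ≤ v 1 * d n := by
  calc welfare n v d x
      ≤ ∑ i ∈ Icc 1 n, v i * (d i - if 1 < i then d (i - 1) else 0) :=
        sum_le_sum_of_subset_of_nonneg (filter_subset _ _) fun _ hi _ =>
          h.welfare_term_nonneg hi
    _ ≤ ∑ i ∈ Icc 1 n, v 1 * (d i - if 1 < i then d (i - 1) else 0) :=
        sum_le_sum fun i hi =>
          mul_le_mul_of_nonneg_right (h.v_le_v le_rfl (mem_Icc.1 hi).1 (mem_Icc.1 hi).2)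
            (h.d_sub_prev_nonneg hi)
    _ = v 1 * d n := by rw [← mul_sum, sum_Icc_sub_prev d h.one_le]

lemma v_one_mul_d_one_le_welfare (h : ValidInstance n v d) {x : ℝ} (hx : x ≤ v 1) :
    v 1 * d 1 ≤ welfare n v d x := by
  have hmem : 1 ∈ (Icc 1 n).filter (fun i => x ≤ v i) :=
    mem_filter.2 ⟨mem_Icc.2 ⟨le_rfl, h.one_le⟩, hx⟩
  have hterm := single_le_sum (f := fun i => v i * (d i - if 1 < i then d (i - 1) else 0))
    (fun _ hi => h.welfare_term_nonneg (mem_filter.1 hi).1) hmem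
  simpa [welfare] using hterm

lemma InBR.sub_mul_d_one_le (h : ValidInstance n v d) {p q : ℝ} (hbr : InBR n v d q p)
    (hq : q ≤ v 1) : (v 1 - q) * d 1 ≤ p * demand n v d (p + q) := by
  have hdev := hbr.2 (v 1 - q) (sub_nonneg.2 hq)
  rw [sub_add_cancel] at hdev
  exact (mul_le_mul_of_nonneg_left (d_one_le_demand h le_rfl) (sub_nonneg.2 hq)).trans hdev

lemma IsNE.v_one_mul_d_one_le_rev (h : ValidInstance n v d) {p q : ℝ} (hNE : IsNE n v d p q)
    (hnt : p + q ≤ v 1) : v 1 * d 1 ≤ rev n v d (p + q) := by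
  obtain ⟨hp, hq, hbrp, hbrq⟩ := hNE
  have hdev_p := hbrp.sub_mul_d_one_le h (by linarith)
  have hdev_q := hbrq.sub_mul_d_one_le h (by linarith)
  rw [add_comm q p] at hdev_q
  calc v 1 * d 1 ≤ (2 * v 1 - (p + q)) * d 1 :=
        mul_le_mul_of_nonneg_right (by linarith) h.2.2.2.1.le
    _ = (v 1 - q) * d 1 + (v 1 - p) * d 1 := by ring
    _ ≤ p * demand n v d (p + q) + q * demand n v d (p + q) := add_le_add hdev_p hdev_q
    _ = rev n v d (p + q) := by rw [rev]; ring

/-- For every non-trivial pure Nash equilibrium: the optimal welfare is at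
most `D` times its welfare, and the monopolist revenue is at most `2D` times
its revenue. -/
theorem stmt_18 (n : ℕ) (v d : ℕ → ℝ) (h : ValidInstance n v d)
    (p q : ℝ) (hNE : IsNE n v d p q) (hnt : p + q ≤ v 1) :
    welfare n v d 0 ≤ (d n / d 1) * welfare n v d (p + q) ∧
    ∀ x : ℝ, 0 ≤ x → rev n v d x ≤ 2 * (d n / d 1) * rev n v d (p + q) := by
  have hd1 : 0 < d 1 := h.2.2.2.1
  have hD : 0 ≤ d n / d 1 := (div_pos (h.d_pos h.one_le le_rfl) hd1).le
  have hscale : v 1 * d n = d n / d 1 * (v 1 * d 1) := by field_simp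
  have hrev := hNE.v_one_mul_d_one_le_rev h hnt
  have hrev_nonneg : 0 ≤ rev n v d (p + q) :=
    (mul_pos (h.v_pos le_rfl h.one_le) hd1).le.trans hrev
  refine ⟨?_, fun x _ => ?_⟩
  · calc welfare n v d 0 ≤ v 1 * d n := welfare_le h 0
      _ = d n / d 1 * (v 1 * d 1) := hscale
      _ ≤ d n / d 1 * welfare n v d (p + q) :=
          mul_le_mul_of_nonneg_left (v_one_mul_d_one_le_welfare h hnt) hD
  · calc rev n v d x ≤ v 1 * d n := rev_le h x
      _ = d n / d 1 * (v 1 * d 1) := hscale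
      _ ≤ d n / d 1 * rev n v d (p + q) := mul_le_mul_of_nonneg_left hrev hD
      _ ≤ 2 * (d n / d 1) * rev n v d (p + q) := by nlinarith
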